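/- If l₁ < l₂, v(l₁) ≥ m and v(l₂) < m, then the optimal value z* of the MaxMin problem with m selected elements satisfies l₁ ≤ z* < l₂. -/

import Mathlib

/-!
A set `M` of size `m ≥ 2` has minimum pairwise distance at least `l` exactly when it is an
`l`-packing. A packing of size `v(l₁) ≥ m` contains one of size exactly `m`, whose minimum distance
is `≥ l₁`; and no `m`-set is an `l₂`-packing since `v(l₂) < m`, so every `m`-set has minimum
distance `< l₂`. As there are finitely many `m`-sets, the optimum is attained, hence `< l₂`.
-/

open Finset

namespace MaxMin

variable {α : Type*} (d : α → α → ℝ)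

/-- `S` is independent in the graph joining `i ≠ j` whenever `d i j < l`. -/
def IsPacking (l : ℝ) (S : Finset α) : Prop :=
  ∀ i ∈ S, ∀ j ∈ S, i ≠ j → l ≤ d i j

open scoped Classical in
/-- The independence number `v(l)`. -/
noncomputable def packingNumber [Fintype α] (l : ℝ) : ℕ :=
  (univ.powerset.filter (IsPacking d l)).sup card

noncomputable def minPairDist (M : Finset α) : ℝ :=
  sInf {s : ℝ | ∃ i ∈ M, ∃ j ∈ M, i ≠ j ∧ s = d i j}

/-- The optimal value `z*` of the MaxMin problem. -/
noncomputable def maxMinValue [Fintype α] (m : ℕ) : ℝ :=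
  sSup {t : ℝ | ∃ M : Finset α, M.card = m ∧ t = minPairDist d M}

variable {d}

theorem IsPacking.mono {l : ℝ} {S M : Finset α} (hS : IsPacking d l S) (hMS : M ⊆ S) :
    IsPacking d l M :=
  fun i hi j hj hij => hS i (hMS hi) j (hMS hj) hij

theorem finite_pairDists (M : Finset α) :
    {s : ℝ | ∃ i ∈ M, ∃ j ∈ M, i ≠ j ∧ s = d i j}.Finite := by
  refine ((M ×ˢ M).image fun p => d p.1 p.2).finite_toSet.subset ?_
  rintro s ⟨i, hi, j, hj, -, rfl⟩
  exact mem_image.2 ⟨(i, j), mem_product.2 ⟨hi, hj⟩, rfl⟩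

theorem le_minPairDist_iff {l : ℝ} {M : Finset α} (hM : 1 < M.card) :
    l ≤ minPairDist d M ↔ IsPacking d l M := by
  constructor
  · intro hl i hi j hj hij
    exact hl.trans (csInf_le (finite_pairDists M).bddBelow ⟨i, hi, j, hj, hij, rfl⟩)
  · intro hpack
    obtain ⟨i, hi, j, hj, hij⟩ := one_lt_card.1 hM
    refine le_csInf ⟨d i j, i, hi, j, hj, hij, rfl⟩ ?_
    rintro s ⟨i, hi, j, hj, hij, rfl⟩
    exact hpack i hi j hj hij

section Fintype

variable [Fintype α]

/-- Holds for any decidability instance, e.g. the `Fin`-specific one found for `Fin n`. -/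
theorem packingNumber_eq_sup_card (l : ℝ)
    [DecidablePred fun S : Finset α => ∀ i ∈ S, ∀ j ∈ S, i ≠ j → l ≤ d i j] :
    packingNumber d l =
      (univ.powerset.filter fun S : Finset α => ∀ i ∈ S, ∀ j ∈ S, i ≠ j → l ≤ d i j).sup card := by
  unfold packingNumber IsPacking
  congr!

theorem card_le_packingNumber {l : ℝ} {S : Finset α} (hS : IsPacking d l S) :
    S.card ≤ packingNumber d l := by
  classical
  exact le_sup (mem_filter.2 ⟨mem_powerset.2 (subset_univ S), hS⟩)

theorem exists_isPacking_card_eq {l : ℝ} {m : ℕ} (hm : 0 < m) (hv : m ≤ packingNumber d l) :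
    ∃ M : Finset α, M.card = m ∧ IsPacking d l M := by
  classical
  obtain ⟨S, hS, hSm⟩ := (Finset.le_sup_iff hm).1 hv
  obtain ⟨M, hMS, hMm⟩ := exists_subset_card_eq hSm
  exact ⟨M, hMm, IsPacking.mono (mem_filter.1 hS).2 hMS⟩

theorem minPairDist_lt_of_packingNumber_lt {l : ℝ} {M : Finset α} (hM : 1 < M.card)
    (hv : packingNumber d l < M.card) : minPairDist d M < l := by
  by_contra! h
  exact (card_le_packingNumber ((le_minPairDist_iff hM).1 h)).not_gt hv

theorem finite_minPairDists (m : ℕ) :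
    {t : ℝ | ∃ M : Finset α, M.card = m ∧ t = minPairDist d M}.Finite := by
  refine (Set.finite_range (minPairDist d)).subset ?_
  rintro t ⟨M, -, rfl⟩
  exact ⟨M, rfl⟩

variable {m : ℕ}

theorem minPairDist_le_maxMinValue {M : Finset α} (hM : M.card = m) :
    minPairDist d M ≤ maxMinValue d m :=
  le_csSup (finite_minPairDists m).bddAbove ⟨M, hM, rfl⟩

theorem maxMinValue_lt {l : ℝ} (hne : ∃ M : Finset α, M.card = m)
    (h : ∀ M : Finset α, M.card = m → minPairDist d M < l) : maxMinValue d m < l := by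
  obtain ⟨M, hM⟩ := hne
  obtain ⟨M', hM', hopt⟩ : maxMinValue d m ∈ _ :=
    Set.Nonempty.csSup_mem ⟨_, M, hM, rfl⟩ (finite_minPairDists m)
  exact hopt ▸ h M' hM'

end Fintype

end MaxMin

open MaxMin in
theorem maxMin_optimum_bracketed_by_packing_general
    {n : ℕ} (d : Fin n → Fin n → ℝ)
    (m : ℕ) (hm : 2 ≤ m)
    (l₁ l₂ : ℝ)
    (hv₁ : m ≤ (Finset.univ.powerset.filter
        (fun S : Finset (Fin n) => ∀ i ∈ S, ∀ j ∈ S, i ≠ j → l₁ ≤ d i j)).sup Finset.card)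
    (hv₂ : (Finset.univ.powerset.filter
        (fun S : Finset (Fin n) => ∀ i ∈ S, ∀ j ∈ S, i ≠ j → l₂ ≤ d i j)).sup Finset.card < m) :
    l₁ ≤ sSup {t : ℝ | ∃ M : Finset (Fin n), M.card = m ∧
            t = sInf {s : ℝ | ∃ i ∈ M, ∃ j ∈ M, i ≠ j ∧ s = d i j}} ∧
    sSup {t : ℝ | ∃ M : Finset (Fin n), M.card = m ∧
            t = sInf {s : ℝ | ∃ i ∈ M, ∃ j ∈ M, i ≠ j ∧ s = d i j}} < l₂ := by
  change l₁ ≤ maxMinValue d m ∧ maxMinValue d m < l₂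
  rw [← packingNumber_eq_sup_card] at hv₁ hv₂
  obtain ⟨M, hMm, hMpack⟩ := exists_isPacking_card_eq (by omega : 0 < m) hv₁
  have hl₁ : l₁ ≤ minPairDist d M := (le_minPairDist_iff (by omega)).2 hMpack
  refine ⟨hl₁.trans (minPairDist_le_maxMinValue hMm), maxMinValue_lt ⟨M, hMm⟩ ?_⟩
  intro M' hM'm
  exact minPairDist_lt_of_packingNumber_lt (by omega) (hM'm ▸ hv₂)

theorem maxMin_optimum_bracketed_by_packing
    {n : ℕ} (d : Fin n → Fin n → ℝ) (hsym : ∀ i j, d i j = d j i)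
    (m : ℕ) (hm : 2 ≤ m) (hmn : m ≤ n)
    (l₁ l₂ : ℝ) (hl : l₁ < l₂)
    (hv₁ : m ≤ (Finset.univ.powerset.filter
        (fun S : Finset (Fin n) => ∀ i ∈ S, ∀ j ∈ S, i ≠ j → l₁ ≤ d i j)).sup Finset.card)
    (hv₂ : (Finset.univ.powerset.filter
        (fun S : Finset (Fin n) => ∀ i ∈ S, ∀ j ∈ S, i ≠ j → l₂ ≤ d i j)).sup Finset.card < m) :
    l₁ ≤ sSup {t : ℝ | ∃ M : Finset (Fin n), M.card = m ∧
            t = sInf {s : ℝ | ∃ i ∈ M, ∃ j ∈ M, i ≠ j ∧ s = d i j}} ∧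
    sSup {t : ℝ | ∃ M : Finset (Fin n), M.card = m ∧
            t = sInf {s : ℝ | ∃ i ∈ M, ∃ j ∈ M, i ≠ j ∧ s = d i j}} < l₂ :=
  maxMin_optimum_bracketed_by_packing_general d m hm l₁ l₂ hv₁ hv₂
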